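/- For every closed conditional expression t there exists a basic form t' such that CP proves t = t'. Here a basic form is a term generated by the grammar t ::= T | F | t1 ◁ a ▷ t2 with a an atom. -/

import Mathlib

inductive CE (A : Type) : Type
  | tt : CE A
  | ff : CE A
  | atom : A → CE A
  | cond : CE A → CE A → CE A → CE A

inductive Deriv {A : Type} (Ax : CE A → CE A → Prop) : CE A → CE A → Prop
  | ax {t t'} : Ax t t' → Deriv Ax t t'
  | refl (t) : Deriv Ax t t
  | symm {t t'} : Deriv Ax t t' → Deriv Ax t' t
  | trans {t t' t''} : Deriv Ax t t' → Deriv Ax t' t'' → Deriv Ax t t''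
  | congr {x x' y y' z z'} : Deriv Ax x x' → Deriv Ax y y' → Deriv Ax z z' →
      Deriv Ax (.cond x y z) (.cond x' y' z')
  | cp1 (x y) : Deriv Ax (.cond x .tt y) x
  | cp2 (x y) : Deriv Ax (.cond x .ff y) y
  | cp3 (x) : Deriv Ax (.cond .tt x .ff) x
  | cp4 (x y z u v) : Deriv Ax (.cond x (.cond y z u) v) (.cond (.cond x y v) z (.cond x u v))

/-- Derivability from the CP axioms alone (no extra axioms). -/
def CP {A : Type} : CE A → CE A → Prop := Deriv (fun _ _ => False)

/-- Basic forms: T, F, and t1 ◁ a ▷ t2 with a an atom and t1, t2 basic forms. -/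
inductive BasicForm {A : Type} : CE A → Prop
  | tt : BasicForm .tt
  | ff : BasicForm .ff
  | cond {t1 t2 : CE A} (a : A) : BasicForm t1 → BasicForm t2 →
      BasicForm (.cond t1 (.atom a) t2)

/-!
Induction on the term. An atom `a` is `T ◁ a ▷ F` by the third axiom. For `x ◁ y ▷ z`, first
replace `x`, `y`, `z` by basic forms; then the fourth axiom pushes `x` and `z` down through the
atoms of the basic form `y` to its leaves, where the first two axioms collapse `x ◁ T ▷ z` to `x`
and `x ◁ F ▷ z` to `z`.
-/

theorem BasicForm.exists_cp_cond {A : Type} {x y z : CE A} (hx : BasicForm x)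
    (hy : BasicForm y) (hz : BasicForm z) :
    ∃ w : CE A, BasicForm w ∧ CP (.cond x y z) w := by
  induction hy with
  | tt => exact ⟨x, hx, Deriv.cp1 x z⟩
  | ff => exact ⟨z, hz, Deriv.cp2 x z⟩
  | cond a _ _ ih₁ ih₂ =>
    obtain ⟨w₁, hw₁, d₁⟩ := ih₁
    obtain ⟨w₂, hw₂, d₂⟩ := ih₂
    exact ⟨.cond w₁ (.atom a) w₂, .cond a hw₁ hw₂,
      Deriv.trans (Deriv.cp4 x _ _ _ z) (Deriv.congr d₁ (Deriv.refl _) d₂)⟩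

theorem exists_basic_form (A : Type) (t : CE A) :
    ∃ t' : CE A, BasicForm t' ∧ CP t t' := by
  induction t with
  | tt => exact ⟨.tt, .tt, Deriv.refl _⟩
  | ff => exact ⟨.ff, .ff, Deriv.refl _⟩
  | atom a => exact ⟨.cond .tt (.atom a) .ff, .cond a .tt .ff, Deriv.symm (Deriv.cp3 _)⟩
  | cond x y z ihx ihy ihz =>
    obtain ⟨x', hx', dx⟩ := ihx
    obtain ⟨y', hy', dy⟩ := ihy
    obtain ⟨z', hz', dz⟩ := ihz
    obtain ⟨w, hw, dw⟩ := hx'.exists_cp_cond hy' hz'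
    exact ⟨w, hw, Deriv.trans (Deriv.congr dx dy dz) dw⟩
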